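/- arXiv:2411.07007 — 3 statements merged into one kernel-verified Lean document; each statement's English description precedes it below -/
import Mathlib

section
/- Let S be a finite set, γ ∈ [0,1), V a real normed vector space, f : S → V, and (p_t)_{t≥0} distributions on S with p_0 = P_0 and p_{t+1}(s') = ∑_s p_t(s)·K(s,s') for a Markov kernel K. Then ∑_s μ(s)·(f(s) − γ·∑_{s'} K(s,s')·f(s')) = (1−γ)·∑_s P_0(s)·f(s), where μ(s) = (1−γ)∑_{t=0}^∞ γ^t p_t(s). -/
/-- Telescoping identity (Lemma 1): for a finite-state Markov chain with kernel `K`,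
initial distribution `P_0`, state marginals `p_t`, occupancy `μ`, and any vector-valued `f`,
`∑_s μ(s)·(f(s) − γ·∑_{s'} K(s,s')·f(s')) = (1−γ)·∑_s P_0(s)·f(s)`. -/
theorem telescoping_identity (S : Type*) [Fintype S] (γ : ℝ) (hγ0 : 0 ≤ γ) (hγ1 : γ < 1)
    (V : Type*) [NormedAddCommGroup V] [NormedSpace ℝ V]
    (f : S → V) (P0 : S → ℝ) (K : S → S → ℝ)
    (hKnn : ∀ s s', 0 ≤ K s s') (hKsum : ∀ s, ∑ s', K s s' = 1)
    (p : ℕ → S → ℝ) (hp0 : p 0 = P0)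
    (hpnn : ∀ t s, 0 ≤ p t s) (hpsum : ∀ t, ∑ s, p t s = 1)
    (hrec : ∀ t s', p (t + 1) s' = ∑ s, p t s * K s s')
    (μ : S → ℝ) (hμ : ∀ s, μ s = (1 - γ) * ∑' t : ℕ, γ ^ t * p t s) :
    ∑ s, μ s • (f s - γ • ∑ s', K s s' • f s') = (1 - γ) • ∑ s, P0 s • f s := by
  classical
  have hgeo : Summable fun t : ℕ => γ ^ t := summable_geometric_of_lt_one hγ0 hγ1
  have hple : ∀ t s, p t s ≤ 1 := by
    intro t s
    calc p t s ≤ ∑ s', p t s' :=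
          Finset.single_le_sum (fun s' _ => hpnn t s') (Finset.mem_univ s)
      _ = 1 := hpsum t
  have hsumd : ∀ (d : ℕ) (s : S), Summable fun t => γ ^ t * p (t + d) s := by
    intro d s
    refine Summable.of_nonneg_of_le
      (fun t => mul_nonneg (pow_nonneg hγ0 t) (hpnn _ s)) (fun t => ?_) hgeo
    calc γ ^ t * p (t + d) s ≤ γ ^ t * 1 :=
          mul_le_mul_of_nonneg_left (hple _ s) (pow_nonneg hγ0 t)
      _ = γ ^ t := mul_one _
  have hsum0 : ∀ s : S, Summable fun t => γ ^ t * p t s := by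
    intro s; simpa using hsumd 0 s
  set a : S → ℝ := fun s => ∑' t, γ ^ t * p t s with ha
  set b : S → ℝ := fun s => ∑' t, γ ^ t * p (t + 1) s with hb
  -- telescoping for the real coefficients
  have hcoef : ∀ s, a s - γ * b s = P0 s := by
    intro s
    have h1 : a s = p 0 s + ∑' t, γ ^ (t + 1) * p (t + 1) s := by
      show (∑' t : ℕ, γ ^ t * p t s) = _
      rw [Summable.tsum_eq_zero_add (hsum0 s)]
      simp
    have h2 : γ * b s = ∑' t, γ ^ (t + 1) * p (t + 1) s := by
      show γ * (∑' t : ℕ, γ ^ t * p (t + 1) s) = _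
      rw [← tsum_mul_left]
      congr 1; funext t; ring
    rw [h1, h2, ← hp0]; ring
  -- the matrix step: ∑ s, a s * K s s' = b s'
  have hstep : ∀ s', ∑ s, a s * K s s' = b s' := by
    intro s'
    have h1 : ∀ s, a s * K s s' = ∑' t, γ ^ t * p t s * K s s' := by
      intro s
      show (∑' t : ℕ, γ ^ t * p t s) * K s s' = _
      rw [← tsum_mul_right]
    simp_rw [h1]
    rw [← Summable.tsum_finsetSum (fun s _ => (hsum0 s).mul_right (K s s'))]
    show _ = ∑' t : ℕ, γ ^ t * p (t + 1) s'
    congr 1; funext t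
    rw [hrec t s', Finset.mul_sum]
    congr 1; funext s
    ring
  -- rewrite μ and factor out (1 - γ)
  have hμ' : ∀ s, μ s = (1 - γ) * a s := fun s => hμ s
  calc ∑ s, μ s • (f s - γ • ∑ s', K s s' • f s')
      = (1 - γ) • ∑ s, a s • (f s - γ • ∑ s', K s s' • f s') := by
        rw [Finset.smul_sum]
        congr 1; funext s
        rw [hμ' s, mul_smul]
    _ = (1 - γ) • ∑ s, P0 s • f s := by
        congr 1
        have expand : ∑ s, a s • (f s - γ • ∑ s', K s s' • f s')
            = (∑ s, a s • f s) - γ • ∑ s, a s • ∑ s', K s s' • f s' := by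
          rw [Finset.smul_sum, ← Finset.sum_sub_distrib]
          congr 1; funext s
          rw [smul_sub, smul_comm]
        have hmix : ∑ s, a s • ∑ s', K s s' • f s' = ∑ s', b s' • f s' := by
          simp_rw [Finset.smul_sum, smul_smul]
          rw [Finset.sum_comm]
          congr 1; funext s'
          rw [← Finset.sum_smul, hstep s']
        rw [expand, hmix, Finset.smul_sum, ← Finset.sum_sub_distrib]
        congr 1; funext s
        rw [← hcoef s, sub_smul, smul_smul]
end

section
/- Under the hypotheses of the telescoping lemma, with f(s) = ψ^π(s) (the successor features of policy π) and μ the discounted occupancy measure of trajectories in a replay buffer with the same initial distribution P_0, the expected initial-state successor features satisfy E_{S∼P_0}[ψ^π(S)] = (1−γ)^{-1}·E_{(S,S')∼μ⊗K}[ψ^π(S) − γ·ψ^π(S')]. -/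
/-!
With `m t = ∑ s, p t s • f s`, the recursion `p (t + 1) = p t K` turns the residual
`f - γ • K f`, weighted by `γ ^ t * p t`, into `γ ^ t • m t - γ ^ (t + 1) • m (t + 1)`.
Summing over `t` telescopes to `m 0`, and `μ` is `1 - γ` times these discounted visit weights.
-/

open Finset

theorem hasSum_pow_smul_telescope {R E : Type*} [Ring R] [AddCommGroup E] [TopologicalSpace E]
    [IsTopologicalAddGroup E] [Module R E] (γ : R) (m : ℕ → E)
    (h : Summable fun t => γ ^ t • m t) :
    HasSum (fun t => γ ^ t • (m t - γ • m (t + 1))) (m 0) := by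
  have hshift : HasSum (fun t => γ ^ (t + 1) • m (t + 1)) (∑' t, γ ^ t • m t - m 0) := by
    simpa using (hasSum_nat_add_iff' 1).mpr h.hasSum
  convert h.hasSum.sub hshift using 1
  · ext t
    rw [smul_sub, smul_smul, ← pow_succ]
  · abel

theorem sum_smul_sum_smul_eq_sum_sum_mul_smul {S R E : Type*} [Fintype S] [Semiring R]
    [AddCommMonoid E] [Module R E] (q : S → R) (K : S → S → R) (f : S → E) :
    ∑ s, q s • ∑ s', K s s' • f s' = ∑ s', (∑ s, q s * K s s') • f s' := by
  simp only [sum_smul, smul_sum, smul_smul]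
  exact sum_comm

theorem summable_pow_mul_of_nonneg_of_le_one {γ : ℝ} (hγ0 : 0 ≤ γ) (hγ1 : γ < 1) {x : ℕ → ℝ}
    (hx0 : ∀ t, 0 ≤ x t) (hx1 : ∀ t, x t ≤ 1) : Summable fun t => γ ^ t * x t :=
  (summable_geometric_of_lt_one hγ0 hγ1).of_nonneg_of_le
    (fun t => mul_nonneg (pow_nonneg hγ0 t) (hx0 t))
    (fun t => mul_le_of_le_one_right (pow_nonneg hγ0 t) (hx1 t))

theorem sum_tsum_smul_bellman_residual {S R E : Type*} [Fintype S] [CommRing R]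
    [TopologicalSpace R] [AddCommGroup E] [TopologicalSpace E] [IsTopologicalAddGroup E]
    [T2Space E] [Module R E] [ContinuousSMul R E] (γ : R) (K : S → S → R) (p : ℕ → S → R)
    (hrec : ∀ t s', p (t + 1) s' = ∑ s, p t s * K s s')
    (hp : ∀ s, Summable fun t => γ ^ t * p t s) (f : S → E) :
    ∑ s, (∑' t, γ ^ t * p t s) • (f s - γ • ∑ s', K s s' • f s') = ∑ s, p 0 s • f s := by
  set m : ℕ → E := fun t => ∑ s, p t s • f s
  have hstep : ∀ t, ∑ s, (γ ^ t * p t s) • (f s - γ • ∑ s', K s s' • f s') =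
      γ ^ t • (m t - γ • m (t + 1)) := by
    intro t
    simp only [m, hrec, ← sum_smul_sum_smul_eq_sum_sum_mul_smul, smul_sub, smul_sum,
      sum_sub_distrib, mul_smul, smul_comm γ]
  have hseries := hasSum_sum (s := univ) fun s _ =>
    (hp s).hasSum.smul_const (f s - γ • ∑ s', K s s' • f s')
  rw [funext hstep] at hseries
  refine hseries.unique (hasSum_pow_smul_telescope γ m ?_)
  simpa only [m, smul_sum, smul_smul] using summable_sum fun s _ => (hp s).smul_const (f s)

theorem initial_sf_from_buffer_general (S : Type*) [Fintype S] (d : ℕ)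
    (γ : ℝ) (hγ0 : 0 ≤ γ) (hγ1 : γ < 1)
    (P0 : S → ℝ) (K : S → S → ℝ)
    (p : ℕ → S → ℝ) (hp0 : p 0 = P0)
    (hpnn : ∀ t s, 0 ≤ p t s) (hpsum : ∀ t, ∑ s, p t s = 1)
    (hrec : ∀ t s', p (t + 1) s' = ∑ s, p t s * K s s')
    (μ : S → ℝ) (hμ : ∀ s, μ s = (1 - γ) * ∑' t : ℕ, γ ^ t * p t s)
    (ψ : S → EuclideanSpace ℝ (Fin d)) :
    ∑ s, P0 s • ψ s = (1 - γ)⁻¹ • ∑ s, μ s • (ψ s - γ • ∑ s', K s s' • ψ s') := by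
  have hp1 : ∀ t s, p t s ≤ 1 := fun t s =>
    hpsum t ▸ single_le_sum (fun s' _ => hpnn t s') (mem_univ s)
  have hvisits := sum_tsum_smul_bellman_residual γ K p hrec
    (fun s => summable_pow_mul_of_nonneg_of_le_one hγ0 hγ1 (hpnn · s) (hp1 · s)) ψ
  simp_rw [hμ, mul_smul, ← smul_sum, hvisits, smul_smul,
    inv_mul_cancel₀ (sub_ne_zero.2 hγ1.ne'), one_smul, hp0]

/-- Proposition 1: the expected initial-state successor features of a policy `π` (with
successor features `ψ` satisfying the Bellman equation under the policy kernel `Kπ`)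
can be estimated from transitions `(S, S')` sampled from any occupancy measure `μ`
(generated by a buffer kernel `K`) with the same initial distribution `P_0`:
`E_{S∼P0}[ψ(S)] = (1−γ)⁻¹·E_{(S,S')∼μ⊗K}[ψ(S) − γ·ψ(S')]`. -/
theorem initial_sf_from_buffer (S : Type*) [Fintype S] (d : ℕ)
    (γ : ℝ) (hγ0 : 0 ≤ γ) (hγ1 : γ < 1)
    (P0 : S → ℝ) (hP0nn : ∀ s, 0 ≤ P0 s) (hP0sum : ∑ s, P0 s = 1)
    (K : S → S → ℝ) (hKnn : ∀ s s', 0 ≤ K s s') (hKsum : ∀ s, ∑ s', K s s' = 1)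
    (p : ℕ → S → ℝ) (hp0 : p 0 = P0)
    (hpnn : ∀ t s, 0 ≤ p t s) (hpsum : ∀ t, ∑ s, p t s = 1)
    (hrec : ∀ t s', p (t + 1) s' = ∑ s, p t s * K s s')
    (μ : S → ℝ) (hμ : ∀ s, μ s = (1 - γ) * ∑' t : ℕ, γ ^ t * p t s)
    (φ : S → EuclideanSpace ℝ (Fin d))
    (Kπ : S → S → ℝ) (hKπnn : ∀ s s', 0 ≤ Kπ s s') (hKπsum : ∀ s, ∑ s', Kπ s s' = 1)
    (ψ : S → EuclideanSpace ℝ (Fin d))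
    (hψ : ∀ s, ψ s = φ s + γ • ∑ s', Kπ s s' • ψ s') :
    ∑ s, P0 s • ψ s = (1 - γ)⁻¹ • ∑ s, μ s • (ψ s - γ • ∑ s', K s s' • ψ s') :=
  initial_sf_from_buffer_general S d γ hγ0 hγ1 P0 K p hp0 hpnn hpsum hrec μ hμ ψ
end

section
/- Let K₁, K₂ be Markov kernels on a finite set S, γ ∈ [0,1), and φ : S → ℝ^d with ‖φ(s)‖ ≤ C. Let ψ₁, ψ₂ be the successor feature maps under K₁ and K₂ respectively. Then sup_s ‖ψ₁(s) − ψ₂(s)‖ ≤ (γ·C/(1−γ)²)·sup_s ‖K₁(s,·) − K₂(s,·)‖_{TV'}, where ‖p − q‖_{TV'} = ∑_{s'} |p(s') − q(s')|. -/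
/-!
Write `L_s A := ∑ s', A s s' • φ s'`, so that `ψᵢ s = ∑' t, γ ^ t • L_s (Kᵢ ^ t)`. With the
max-row-sum norm on matrices, `L_s` is bounded by `C`, row-stochastic matrices have norm at most
one, and the telescoping identity `a ^ (n + 1) - b ^ (n + 1) = a ^ n (a - b) + (a ^ n - b ^ n) b`
gives `‖K₁ ^ t - K₂ ^ t‖ ≤ t ‖K₁ - K₂‖`. Summing against `γ ^ t` and using
`∑ t, t γ ^ t = γ / (1 - γ) ^ 2` yields the bound.
-/

open Finset Matrix

attribute [local instance] Matrix.linftyOpSeminormedAddCommGroup Matrix.linftyOpNormedAddCommGroup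
  Matrix.linftyOpNormedRing

section PowSub

variable {R : Type*} [SeminormedRing R] {a b : R}

lemma norm_pow_mul_le_of_norm_le_one (ha : ‖a‖ ≤ 1) (x : R) : ∀ n : ℕ, ‖a ^ n * x‖ ≤ ‖x‖
  | 0 => by simp
  | n + 1 =>
    calc ‖a ^ (n + 1) * x‖ = ‖a * (a ^ n * x)‖ := by rw [pow_succ', mul_assoc]
      _ ≤ ‖a‖ * ‖a ^ n * x‖ := norm_mul_le _ _
      _ ≤ 1 * ‖x‖ :=
        mul_le_mul ha (norm_pow_mul_le_of_norm_le_one ha x n) (norm_nonneg _) zero_le_one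
      _ = ‖x‖ := one_mul _

lemma norm_pow_sub_pow_le_of_norm_le_one (ha : ‖a‖ ≤ 1) (hb : ‖b‖ ≤ 1) :
    ∀ n : ℕ, ‖a ^ n - b ^ n‖ ≤ n * ‖a - b‖
  | 0 => by simp
  | n + 1 => by
    have telescope : a ^ (n + 1) - b ^ (n + 1) = a ^ n * (a - b) + (a ^ n - b ^ n) * b := by
      simp only [pow_succ, mul_sub, sub_mul]
      abel
    have ih := norm_pow_sub_pow_le_of_norm_le_one ha hb n
    calc ‖a ^ (n + 1) - b ^ (n + 1)‖ ≤ ‖a ^ n * (a - b)‖ + ‖(a ^ n - b ^ n) * b‖ :=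
          telescope ▸ norm_add_le _ _
      _ ≤ ‖a - b‖ + ‖a ^ n - b ^ n‖ * 1 := by
          gcongr
          · exact norm_pow_mul_le_of_norm_le_one ha _ n
          · exact (norm_mul_le _ _).trans (by gcongr)
      _ ≤ (n + 1 : ℕ) * ‖a - b‖ := by push_cast; linarith

end PowSub

section GeometricSeries

variable {R E F : Type*} [SeminormedRing R] [NormedAddCommGroup E] [NormedSpace ℝ E]
  [CompleteSpace E] [FunLike F R E]
  {L : F} {C γ : ℝ} {a b : R}

lemma summable_geometric_smul_map_pow (hC : 0 ≤ C) (hL : ∀ x, ‖L x‖ ≤ C * ‖x‖)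
    (hγ0 : 0 ≤ γ) (hγ1 : γ < 1) (ha : ‖a‖ ≤ 1) :
    Summable fun t : ℕ => γ ^ t • L (a ^ t) := by
  refine .of_norm_bounded ((summable_geometric_of_lt_one hγ0 hγ1).mul_left (C * ‖(1 : R)‖))
    fun t => ?_
  have hpow : ‖a ^ t‖ ≤ ‖(1 : R)‖ := by
    simpa using norm_pow_mul_le_of_norm_le_one ha 1 t
  calc ‖γ ^ t • L (a ^ t)‖ = γ ^ t * ‖L (a ^ t)‖ := by
        rw [norm_smul, Real.norm_of_nonneg (by positivity)]
    _ ≤ γ ^ t * (C * ‖(1 : R)‖) := by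
        gcongr; exact (hL _).trans (mul_le_mul_of_nonneg_left hpow hC)
    _ = C * ‖(1 : R)‖ * γ ^ t := mul_comm _ _

theorem norm_tsum_geometric_smul_map_pow_sub_le [AddMonoidHomClass F R E] (hC : 0 ≤ C)
    (hL : ∀ x, ‖L x‖ ≤ C * ‖x‖) (hγ0 : 0 ≤ γ) (hγ1 : γ < 1) (ha : ‖a‖ ≤ 1) (hb : ‖b‖ ≤ 1) :
    ‖∑' t : ℕ, γ ^ t • L (a ^ t) - ∑' t : ℕ, γ ^ t • L (b ^ t)‖
      ≤ γ * C / (1 - γ) ^ 2 * ‖a - b‖ := by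
  have hγ : ‖γ‖ < 1 := by rwa [Real.norm_of_nonneg hγ0]
  have hterm : ∀ t : ℕ,
      ‖γ ^ t • L (a ^ t) - γ ^ t • L (b ^ t)‖ ≤ C * ‖a - b‖ * (t * γ ^ t) := fun t =>
    calc ‖γ ^ t • L (a ^ t) - γ ^ t • L (b ^ t)‖ = γ ^ t * ‖L (a ^ t - b ^ t)‖ := by
          rw [← smul_sub, ← map_sub, norm_smul, Real.norm_of_nonneg (by positivity)]
      _ ≤ γ ^ t * (C * (t * ‖a - b‖)) := by
          gcongr
          exact (hL _).trans (by gcongr; exact norm_pow_sub_pow_le_of_norm_le_one ha hb t)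
      _ = C * ‖a - b‖ * (t * γ ^ t) := by ring
  calc ‖∑' t : ℕ, γ ^ t • L (a ^ t) - ∑' t : ℕ, γ ^ t • L (b ^ t)‖
      = ‖∑' t : ℕ, (γ ^ t • L (a ^ t) - γ ^ t • L (b ^ t))‖ := by
        rw [(summable_geometric_smul_map_pow hC hL hγ0 hγ1 ha).tsum_sub
          (summable_geometric_smul_map_pow hC hL hγ0 hγ1 hb)]
    _ ≤ C * ‖a - b‖ * (γ / (1 - γ) ^ 2) :=
        tsum_of_norm_bounded ((hasSum_coe_mul_geometric_of_norm_lt_one hγ).mul_left _) hterm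
    _ = γ * C / (1 - γ) ^ 2 * ‖a - b‖ := by ring

end GeometricSeries

section LinftyOpNorm

variable {m n α : Type*} [Fintype m] [Fintype n] [SeminormedAddCommGroup α]

lemma Matrix.linfty_opNorm_le_iff {A : Matrix m n α} {r : ℝ} (hr : 0 ≤ r) :
    ‖A‖ ≤ r ↔ ∀ i, ∑ j, ‖A i j‖ ≤ r := by
  lift r to NNReal using hr
  simp only [← coe_nnnorm, NNReal.coe_le_coe, linfty_opNNNorm_def, Finset.sup_le_iff,
    mem_univ, true_implies, ← NNReal.coe_sum]

lemma Matrix.sum_norm_le_linfty_opNorm (A : Matrix m n α) (i : m) : ∑ j, ‖A i j‖ ≤ ‖A‖ :=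
  (linfty_opNorm_le_iff (norm_nonneg A)).1 le_rfl i

lemma Matrix.linfty_opNorm_eq_sup' [Nonempty m] (A : Matrix m n α) :
    ‖A‖ = univ.sup' univ_nonempty fun i => ∑ j, ‖A i j‖ := by
  set r := univ.sup' univ_nonempty fun i => ∑ j, ‖A i j‖
  have hrow : ∀ i, ∑ j, ‖A i j‖ ≤ r := fun i => le_sup' (fun i => ∑ j, ‖A i j‖) (mem_univ i)
  obtain ⟨i₀⟩ := ‹Nonempty m›
  have hr : 0 ≤ r := (sum_nonneg fun _ _ => norm_nonneg _).trans (hrow i₀)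
  exact le_antisymm ((linfty_opNorm_le_iff hr).2 hrow)
    (sup'_le _ _ fun i _ => sum_norm_le_linfty_opNorm A i)

lemma Matrix.linfty_opNorm_le_one_of_mem_rowStochastic [DecidableEq n] {M : Matrix n n ℝ}
    (hM : M ∈ rowStochastic ℝ n) : ‖M‖ ≤ 1 :=
  (linfty_opNorm_le_iff zero_le_one).2 fun i => by
    simp [Real.norm_of_nonneg (nonneg_of_mem_rowStochastic hM),
      sum_row_of_mem_rowStochastic hM i]

end LinftyOpNorm

lemma norm_sum_smul_le {ι E : Type*} [Fintype ι] [SeminormedAddCommGroup E] [NormedSpace ℝ E]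
    {φ : ι → E} {C : ℝ} (hφ : ∀ i, ‖φ i‖ ≤ C) (w : ι → ℝ) :
    ‖∑ i, w i • φ i‖ ≤ (∑ i, ‖w i‖) * C := by
  rw [sum_mul]
  refine (norm_sum_le _ _).trans (sum_le_sum fun i _ => ?_)
  rw [norm_smul]
  exact mul_le_mul_of_nonneg_left (hφ i) (norm_nonneg _)

/-- Continuity of successor features in the kernel:
`sup_s ‖ψ₁(s) − ψ₂(s)‖ ≤ (γ·C/(1−γ)²)·sup_s ∑_{s'} |K₁(s,s') − K₂(s,s')|`. -/
theorem sf_kernel_lipschitz (S : Type*) [Fintype S] [DecidableEq S] [Nonempty S] (d : ℕ)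
    (γ : ℝ) (hγ0 : 0 ≤ γ) (hγ1 : γ < 1)
    (K1 K2 : Matrix S S ℝ)
    (hK1nn : ∀ s s', 0 ≤ K1 s s') (hK1sum : ∀ s, ∑ s', K1 s s' = 1)
    (hK2nn : ∀ s s', 0 ≤ K2 s s') (hK2sum : ∀ s, ∑ s', K2 s s' = 1)
    (φ : S → EuclideanSpace ℝ (Fin d)) (C : ℝ) (hC : ∀ s, ‖φ s‖ ≤ C)
    (ψ1 ψ2 : S → EuclideanSpace ℝ (Fin d))
    (hψ1 : ∀ s, ψ1 s = ∑' t : ℕ, γ ^ t • ∑ s', (K1 ^ t) s s' • φ s')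
    (hψ2 : ∀ s, ψ2 s = ∑' t : ℕ, γ ^ t • ∑ s', (K2 ^ t) s s' • φ s') :
    ∀ s, ‖ψ1 s - ψ2 s‖
      ≤ γ * C / (1 - γ) ^ 2 *
        (Finset.univ.sup' Finset.univ_nonempty fun s => ∑ s', |K1 s s' - K2 s s'|) := by
  intro s
  have hC0 : 0 ≤ C := (norm_nonneg _).trans (hC s)
  have hK1 : K1 ∈ rowStochastic ℝ S := mem_rowStochastic_iff_sum.2 ⟨hK1nn, hK1sum⟩
  have hK2 : K2 ∈ rowStochastic ℝ S := mem_rowStochastic_iff_sum.2 ⟨hK2nn, hK2sum⟩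
  let L := (Fintype.linearCombination ℝ φ).comp (LinearMap.proj s : Matrix S S ℝ →ₗ[ℝ] S → ℝ)
  have hL : ∀ A : Matrix S S ℝ, ‖L A‖ ≤ C * ‖A‖ := fun A =>
    (norm_sum_smul_le hC (A s)).trans <| by
      rw [mul_comm]; gcongr; exact sum_norm_le_linfty_opNorm A s
  -- Elaborated on its own: unifying it with the goal directly unfolds the two (defeq) ring
  -- structures on matrices and times out.
  have key := norm_tsum_geometric_smul_map_pow_sub_le hC0 hL hγ0 hγ1
    (linfty_opNorm_le_one_of_mem_rowStochastic hK1) (linfty_opNorm_le_one_of_mem_rowStochastic hK2)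
  calc ‖ψ1 s - ψ2 s‖ = ‖∑' t : ℕ, γ ^ t • L (K1 ^ t) - ∑' t : ℕ, γ ^ t • L (K2 ^ t)‖ := by
        rw [hψ1, hψ2]; rfl
    _ ≤ γ * C / (1 - γ) ^ 2 * ‖K1 - K2‖ := key
    _ = _ := by simp [linfty_opNorm_eq_sup', Real.norm_eq_abs]
end
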